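/- The partial fraction expansion π csc(πx) − 1/x = 2x ∑_{k=1}^∞ (−1)^{k+1}/(k² − x²) holds for all real x ∉ ℤ. -/

import Mathlib

/-!
Halving the angle, `1 / sin θ = cot (θ / 2) - cot θ`. Feeding the Mittag-Leffler expansion
`π cot (π x) + 1 / x = ∑_{n ≥ 0} 2x / (x² - n²)` into both cotangents, the series for `x / 2`
is twice the even-indexed part of the series for `x`, so the difference of the two is the
alternating series.
-/

open Real

theorem HasSum.neg_one_pow_mul {α : Type*} [Ring α] [TopologicalSpace α]
    [IsTopologicalAddGroup α] {f : ℕ → α} {a s : α} (ha : HasSum (fun k ↦ 2 * f (2 * k)) a)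
    (hs : HasSum f s) :
    HasSum (fun m ↦ (-1) ^ m * f m) (a - s) := by
  set e : ℕ → α := fun m ↦ if Even m then 2 * f m else 0
  have he : HasSum e a := by
    refine ((mul_right_injective₀ two_ne_zero).hasSum_iff fun m hm ↦ ?_).mp ?_
    · have : ¬ Even m := fun ⟨k, hk⟩ ↦ hm ⟨k, show 2 * k = m by omega⟩
      simp [e, this]
    · convert ha using 2 with k
      simp [e]
  refine (he.sub hs).congr_fun fun m ↦ ?_
  rcases Nat.even_or_odd m with h | h <;>
    simp [e, h, h.neg_one_pow, Nat.not_even_iff_odd.2, two_mul]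

theorem Real.hasSum_pi_mul_cot_add_inv {x : ℝ} (hx : ∀ m : ℤ, x ≠ m) :
    HasSum (fun n : ℕ ↦ 2 * x / (x ^ 2 - n ^ 2)) (π * cot (π * x) + 1 / x) := by
  have hxC : (x : ℂ) ∈ Complex.integerComplement := by
    rintro ⟨m, hm⟩
    exact hx m (by exact_mod_cast hm.symm)
  have hC := (summable_cotTerm hxC).hasSum
  rw [← cot_series_rep' hxC] at hC
  rw [← hasSum_nat_add_iff' 1, ← Complex.hasSum_ofReal]
  convert hC using 1
  · ext n
    rw [cotTerm_identity hxC]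
    push_cast
    ring
  · have hx0 : (x : ℂ) ≠ 0 := Complex.integerComplement.ne_zero hxC
    rw [Finset.sum_range_one]
    push_cast
    field_simp
    ring

/-- Also true where `sin θ = 0`: both sides then vanish by the `a / 0 = 0` convention. -/
theorem Real.one_div_sin_eq_cot_half_sub_cot (θ : ℝ) : 1 / sin θ = cot (θ / 2) - cot θ := by
  have hsin : sin θ = 2 * sin (θ / 2) * cos (θ / 2) := by
    rw [← sin_two_mul, mul_div_cancel₀ _ two_ne_zero]
  have hcos : cos θ = 2 * cos (θ / 2) ^ 2 - 1 := by
    rw [← cos_two_mul, mul_div_cancel₀ _ two_ne_zero]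
  rw [cot_eq_cos_div_sin, cot_eq_cos_div_sin, hsin, hcos]
  by_cases hs : sin (θ / 2) = 0
  · simp [hs]
  by_cases hc : cos (θ / 2) = 0
  · simp [hc]
  field_simp
  ring

theorem cosecant_partial_fractions (x : ℝ) (hx : ∀ m : ℤ, x ≠ (m : ℝ)) :
    π * (1 / Real.sin (π * x)) - 1 / x =
      2 * x * ∑' k : ℕ, (-1 : ℝ) ^ k / (((k : ℝ) + 1) ^ 2 - x ^ 2) := by
  have hx0 : x ≠ 0 := by simpa using hx 0
  have hhalf : ∀ m : ℤ, x / 2 ≠ m := fun m h ↦ hx (2 * m) (by push_cast; linarith)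
  set g : ℕ → ℝ := fun n ↦ 2 * x / (x ^ 2 - n ^ 2)
  have heven : HasSum (fun k ↦ 2 * g (2 * k)) (π * cot (π * (x / 2)) + 2 / x) := by
    convert hasSum_pi_mul_cot_add_inv hhalf using 1
    · ext k
      rw [show (x / 2) ^ 2 - (k : ℝ) ^ 2 = (x ^ 2 - ((2 * k : ℕ) : ℝ) ^ 2) / 4 by
        push_cast; ring, div_div_eq_mul_div]
      ring
    · ring
  have halt :=
    (hasSum_nat_add_iff' 1).2 (heven.neg_one_pow_mul (hasSum_pi_mul_cot_add_inv hx))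
  rw [← tsum_mul_left, (halt.congr_fun fun k ↦ ?_).tsum_eq, one_div_sin_eq_cot_half_sub_cot]
  · rw [Finset.sum_range_one]
    simp only [g, pow_zero, CharP.cast_eq_zero]
    field_simp
    ring
  · simp only [g]
    rw [← neg_sub, div_neg]
    push_cast
    ring
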